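/- Let (A, E, i, j, ∂) be an unrolled exact couple of bigraded abelian groups, let n, s be integers and let a ∈ A n s. If j(a) ∉ B_∞^{n,s}, then the image κ_s(a) of a in G n does not lie in F^{s+1} G n; in particular κ_s(a) ≠ 0. (In spectral sequence language: any homotopy class detected by a permanent cycle that survives to the ∞-page is nonzero in the abutment.) -/

import Mathlib

/-- An unrolled exact couple of bigraded abelian groups. -/
structure UnrolledExactCouple where
  A : ℤ → ℤ → AddCommGrpCat
  E : ℤ → ℤ → AddCommGrpCat
  i : ∀ n s : ℤ, A n (s + 1) →+ A n s
  j : ∀ n s : ℤ, A n s →+ E n s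
  d : ∀ n s : ℤ, E n s →+ A (n - 1) (s + 1)
  exact_ij : ∀ n s : ℤ, (i n s).range = (j n s).ker
  exact_jd : ∀ n s : ℤ, (j n s).range = (d n s).ker
  exact_di : ∀ n s : ℤ, (d n s).range = (i (n - 1) s).ker

namespace UnrolledExactCouple

variable (C : UnrolledExactCouple)

/-- Transport along an equality of the filtration index. -/
def cast (n : ℤ) {s t : ℤ} (h : s = t) : C.A n s →+ C.A n t := by
  subst h; exact AddMonoidHom.id _

/-- The `r`-fold composite `i^r : A n (s+r) →+ A n s` of the maps `i`. -/
def ipow (n : ℤ) : ∀ (r : ℕ) (s : ℤ), C.A n (s + (r : ℤ)) →+ C.A n s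
  | 0, s => C.cast n (by simp)
  | r + 1, s =>
      ((C.i n s).comp ((ipow n r (s + 1)).comp (C.cast n (by push_cast; ring))))

/-- The transition map `A n t →+ A n s` for `s ≤ t`, a composite of the maps `i`. -/
def tr (n : ℤ) (t s : ℤ) (h : s ≤ t) : C.A n t →+ C.A n s :=
  (C.ipow n (t - s).toNat s).comp
    (C.cast n (by rw [Int.toNat_of_nonneg (by omega : (0:ℤ) ≤ t - s)]; omega))

/-- The colimit `G n` of the direct system `(A n s)` (s decreasing) along the maps `i`. -/
def G (n : ℤ) : Type :=
  AddCommGroup.DirectLimit (fun s : ℤᵒᵈ => C.A n (OrderDual.ofDual s))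
    (fun s t h => C.tr n (OrderDual.ofDual s) (OrderDual.ofDual t) h)

noncomputable instance (n : ℤ) : AddCommGroup (C.G n) := by
  unfold G; infer_instance

/-- The structure map `κ_s : A n s →+ G n`. -/
noncomputable def kappa (n s : ℤ) : C.A n s →+ C.G n :=
  AddCommGroup.DirectLimit.of (fun s : ℤᵒᵈ => C.A n (OrderDual.ofDual s))
    (fun s t h => C.tr n (OrderDual.ofDual s) (OrderDual.ofDual t) h) (OrderDual.toDual s)

/-- The abutment filtration `F^s G n := im κ_s`. -/
noncomputable def F (n s : ℤ) : AddSubgroup (C.G n) :=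
  (C.kappa n s).range

/-- The `r`-cycles `Z_r^{n,s} := ∂⁻¹(im(i^r : A (n-1) (s+1+r) → A (n-1) (s+1)))`. -/
def Z (n s : ℤ) (r : ℕ) : AddSubgroup (C.E n s) :=
  ((C.ipow (n - 1) r (s + 1)).range).comap (C.d n s)

/-- The `r`-boundaries `B_r^{n,s} := j(ker(i^r : A n s → A n (s-r)))`. -/
def B (n s : ℤ) (r : ℕ) : AddSubgroup (C.E n s) :=
  ((C.tr n s (s - (r : ℤ)) (by omega)).ker).map (C.j n s)

/-- The permanent cycles `Z_∞^{n,s} = ⋂_r Z_r^{n,s}`. -/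
def Zinf (n s : ℤ) : AddSubgroup (C.E n s) := ⨅ r : ℕ, C.Z n s r

/-- The infinite boundaries `B_∞^{n,s} = ⋃_r B_r^{n,s}`. -/
def Binf (n s : ℤ) : AddSubgroup (C.E n s) := ⨆ r : ℕ, C.B n s r

/-- Conditional convergence: for every `n` the limit and `lim¹` of the tower
`(A n s)_s` vanish, i.e. the map `(a_s)_s ↦ (a_s - i(a_{s+1}))_s` is bijective. -/
def ConvergesConditionally : Prop :=
  ∀ n : ℤ, Function.Bijective
    (fun (a : ∀ s : ℤ, C.A n s) => fun s : ℤ => a s - C.i n s (a (s + 1)))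

/-- Strong convergence. -/
def ConvergesStrongly : Prop :=
  (∀ n : ℤ,
      (⨅ s : ℤ, C.F n s) = ⊥ ∧
      (∀ b : ℤ → C.G n, (∀ s, b s ∈ C.F n s) →
        ∃ x : ℤ → C.G n, (∀ s, x s ∈ C.F n s) ∧ ∀ s, x s - x (s + 1) = b s)) ∧
    (∀ n s : ℤ, C.Zinf n s = (C.d n s).ker)

end UnrolledExactCouple

/-
If `κ_s(a) = κ_{s+1}(b)`, then `a - i(b)` maps to zero in the colimit, so it is already killed by
some iterate `i^r`, i.e. lies in the kernel of `A n s → A n (s - r)`. Since `j ∘ i = 0` by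
exactness, `j(a) = j(a - i(b))` is then an `r`-boundary.
-/

namespace UnrolledExactCouple

variable (C : UnrolledExactCouple) (n : ℤ)

lemma cast_cast {s t u : ℤ} (h₁ : s = t) (h₂ : t = u) (x : C.A n s) :
    C.cast n h₂ (C.cast n h₁ x) = C.cast n (h₁.trans h₂) x := by
  subst h₁ h₂; rfl

lemma ipow_congr {r r' : ℕ} (h : r = r') (s : ℤ) (x : C.A n (s + r)) :
    C.ipow n r s x = C.ipow n r' s (C.cast n (by rw [h]) x) := by
  subst h; rfl

lemma tr_eq_ipow (r : ℕ) {t s : ℤ} (h : s ≤ t) (hr : t = s + r) (x : C.A n t) :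
    C.tr n t s h x = C.ipow n r s (C.cast n hr x) := by
  rw [tr, AddMonoidHom.comp_apply, C.ipow_congr n (by omega : (t - s).toNat = r), cast_cast]

lemma tr_self (s : ℤ) (h : s ≤ s) (x : C.A n s) : C.tr n s s h x = x := by
  rw [C.tr_eq_ipow n 0 h (by simp)]
  exact C.cast_cast n _ _ x

lemma tr_eq_i_tr {t s : ℤ} (h : s + 1 ≤ t) (x : C.A n t) :
    C.tr n t s (by omega) x = C.i n s (C.tr n t (s + 1) h x) := by
  obtain ⟨r, hr⟩ : ∃ r : ℕ, t = s + 1 + r := ⟨(t - (s + 1)).toNat, by omega⟩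
  rw [C.tr_eq_ipow n (r + 1) _ (by omega), C.tr_eq_ipow n r h hr]
  exact congrArg (C.i n s) (congrArg (C.ipow n r (s + 1)) (C.cast_cast n _ _ x))

lemma tr_succ (s : ℤ) (h : s ≤ s + 1) (x : C.A n (s + 1)) :
    C.tr n (s + 1) s h x = C.i n s x := by
  rw [C.tr_eq_i_tr n le_rfl, C.tr_self]

lemma tr_tr {u t s : ℤ} (h₁ : s ≤ t) (h₂ : t ≤ u) (x : C.A n u) :
    C.tr n t s h₁ (C.tr n u t h₂ x) = C.tr n u s (h₁.trans h₂) x := by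
  obtain ⟨r, hr⟩ : ∃ r : ℕ, t = s + r := ⟨(t - s).toNat, by omega⟩
  induction r generalizing s with
  | zero =>
    obtain rfl : s = t := by omega
    rw [C.tr_self]
  | succ r ih =>
    rw [C.tr_eq_i_tr n (t := t) (s := s) (by omega), C.tr_eq_i_tr n (t := u) (s := s) (by omega),
      ih (s := s + 1) (by omega) (by omega)]

instance directedSystem : DirectedSystem (fun s : ℤᵒᵈ => C.A n (OrderDual.ofDual s))
    (fun s t h => C.tr n (OrderDual.ofDual s) (OrderDual.ofDual t) h) where
  map_self _ x := C.tr_self n _ _ x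
  map_map := fun {_ _ _} _ _ x => C.tr_tr n _ _ x

lemma kappa_tr {t s : ℤ} (h : s ≤ t) (x : C.A n t) :
    C.kappa n s (C.tr n t s h x) = C.kappa n t x :=
  AddCommGroup.DirectLimit.of_f (G := fun u : ℤᵒᵈ => C.A n (OrderDual.ofDual u))
    (f := fun u v h => C.tr n (OrderDual.ofDual u) (OrderDual.ofDual v) h)
    (i := OrderDual.toDual t) (j := OrderDual.toDual s) h x

lemma kappa_i (s : ℤ) (x : C.A n (s + 1)) : C.kappa n s (C.i n s x) = C.kappa n (s + 1) x := by
  rw [← C.tr_succ n s (by omega), kappa_tr]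

lemma exists_tr_eq_zero_of_kappa_eq_zero {s : ℤ} {x : C.A n s} (hx : C.kappa n s x = 0) :
    ∃ (t : ℤ) (h : t ≤ s), C.tr n s t h x = 0 :=
  AddCommGroup.DirectLimit.of.zero_exact (G := fun u : ℤᵒᵈ => C.A n (OrderDual.ofDual u))
    (f := fun u v h => C.tr n (OrderDual.ofDual u) (OrderDual.ofDual v) h) _ x hx

lemma j_i (s : ℤ) (x : C.A n (s + 1)) : C.j n s (C.i n s x) = 0 := by
  rw [← AddMonoidHom.mem_ker, ← C.exact_ij]
  exact ⟨x, rfl⟩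

lemma exists_j_mem_B_of_kappa_eq_zero {s : ℤ} {x : C.A n s} (hx : C.kappa n s x = 0) :
    ∃ r : ℕ, C.j n s x ∈ C.B n s r := by
  obtain ⟨t, hts, hxt⟩ := C.exists_tr_eq_zero_of_kappa_eq_zero n hx
  obtain ⟨r, rfl⟩ : ∃ r : ℕ, t = s - r := ⟨(s - t).toNat, by omega⟩
  exact ⟨r, x, hxt, rfl⟩

lemma exists_j_mem_B_of_kappa_mem_F_succ {s : ℤ} {a : C.A n s}
    (ha : C.kappa n s a ∈ C.F n (s + 1)) : ∃ r : ℕ, C.j n s a ∈ C.B n s r := by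
  obtain ⟨b, hb⟩ := ha
  have hab : C.kappa n s (a - C.i n s b) = 0 := by rw [map_sub, kappa_i, hb, sub_self]
  simpa only [map_sub, j_i, sub_zero] using C.exists_j_mem_B_of_kappa_eq_zero n hab

end UnrolledExactCouple

/-- If `j(a)` does not lie in any of the `r`-boundaries `B_r^{n,s}` (i.e. `j(a) ∉ B_∞^{n,s}`),
then the image `κ_s(a)` of `a` in the abutment `G n` does not lie in `F^{s+1} G n`;
in particular it is nonzero. -/
theorem UnrolledExactCouple.detected_ne_zero
    (C : UnrolledExactCouple) (n s : ℤ) (a : C.A n s)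
    (h : ∀ r : ℕ, C.j n s a ∉ C.B n s r) :
    C.kappa n s a ∉ C.F n (s + 1) ∧ C.kappa n s a ≠ 0 := by
  have hF : C.kappa n s a ∉ C.F n (s + 1) := fun ha =>
    (C.exists_j_mem_B_of_kappa_mem_F_succ n ha).elim h
  exact ⟨hF, fun h0 => hF (h0 ▸ zero_mem _)⟩
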